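/- Let B be the ball algebra on the closed unit ball of ℂ^d and let J ⊆ B be a closed homogeneous ideal. Let K = {p ∈ ℂ[z₁,…,z_d] : ι(p) ∈ J}, where ι(p) is the restriction of p to the closed ball. Then K is a homogeneous ideal of ℂ[z₁,…,z_d], the restrictions ι(K) are contained in J, J is contained in (hence equal to) the closure of ι(K) in B, and K is the unique homogeneous ideal of ℂ[z₁,…,z_d] with ι(K) ⊆ J ⊆ closure(ι(K)). -/

import Mathlib

/-!
Averaging the dilations `z ↦ f (t ζʲ z)` with weights `ζ⁻ⁿʲ` over the `k`-th roots of unity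
`ζ` sends the restriction `ι p` of a polynomial of degree `< k` to `tⁿ ι(pₙ)`; it is a
contraction, and it maps `J` into `J` when `|t| < 1`. So `ι p ↦ ι(pₙ)` is 1-Lipschitz and
extends to the ball algebra, with values in the finite-dimensional, hence closed, space of
restrictions of `n`-homogeneous polynomials; as `J` is closed, the extension maps `J` into `J`.
For `f ∈ J` the components `fₙ` therefore lie in `ι(K)`, the elements `∑_{n ≤ N} tⁿ fₙ` of
`ι(K)` approximate `f (t ·)`, and letting `t → 1` gives `J ⊆ closure ι(K)`. Uniqueness: if `K'`
is homogeneous and `J ⊆ closure ι(K')`, each component of `p ∈ K` is a limit of restrictions of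
elements of `K'` of the same degree, hence lies in `K'`, because `ι` is injective (a homogeneous
polynomial vanishing on the ball vanishes everywhere).
-/

open MvPolynomial Metric

noncomputable section

abbrev Cd (d : ℕ) := EuclideanSpace ℂ (Fin d)

abbrev CBall (d : ℕ) : Set (Cd d) := Metric.closedBall (0 : Cd d) 1

instance (d : ℕ) : CompactSpace (CBall d) :=
  isCompact_iff_compactSpace.mp (isCompact_closedBall _ _)

/-- The `i`-th coordinate function on the closed unit ball. -/
def coordFn (d : ℕ) (i : Fin d) : C(CBall d, ℂ) :=
  ⟨fun z => (z : Cd d) i, by first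
    | exact (continuous_apply i).comp ((PiLp.continuous_ofLp _ _).comp continuous_subtype_val)
    | fun_prop
    | continuity⟩

/-- Restriction of a polynomial to the closed unit ball, as an element of
`C(closedBall, ℂ)`. -/
def polyMap (d : ℕ) : MvPolynomial (Fin d) ℂ →ₐ[ℂ] C(CBall d, ℂ) :=
  aeval (coordFn d)

/-- The ball algebra: the closure, in the Banach algebra of continuous functions on
the closed unit ball of ℂ^d with the supremum norm, of the restrictions of
polynomials. -/
def ballAlg (d : ℕ) : Set C(CBall d, ℂ) := closure (Set.range (polyMap d))

/-- `J` is an ideal of the ball algebra `B`. -/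
def IsIdealOfBallAlg (d : ℕ) (J : Set C(CBall d, ℂ)) : Prop :=
  J ⊆ ballAlg d ∧ (0 : C(CBall d, ℂ)) ∈ J ∧
    (∀ f ∈ J, ∀ g ∈ J, f + g ∈ J) ∧ (∀ f ∈ J, ∀ g ∈ ballAlg d, g * f ∈ J)

/-- The self-map of the closed ball given by `z ↦ t z` for `‖t‖ ≤ 1`. -/
def dilatePt (d : ℕ) (t : ℂ) (ht : ‖t‖ ≤ 1) : C(CBall d, CBall d) :=
  ⟨fun z => ⟨t • (z : Cd d), by
      have hz : ‖(z : Cd d)‖ ≤ 1 := mem_closedBall_zero_iff.mp z.2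
      show t • (z : Cd d) ∈ Metric.closedBall 0 1
      rw [mem_closedBall_zero_iff, norm_smul]
      exact mul_le_one₀ ht (norm_nonneg _) hz⟩,
    by exact Continuous.subtype_mk (continuous_subtype_val.const_smul t) _⟩

/-- The dilation `f ↦ (z ↦ f (t z))` on continuous functions on the closed ball. -/
def dilateFn (d : ℕ) (t : ℂ) (ht : ‖t‖ ≤ 1) (f : C(CBall d, ℂ)) : C(CBall d, ℂ) :=
  f.comp (dilatePt d t ht)

/-- A closed ideal of the ball algebra is homogeneous if it is invariant under all
dilations `z ↦ t z`, `|t| < 1`. -/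
def IsHomogBallIdeal (d : ℕ) (J : Set C(CBall d, ℂ)) : Prop :=
  ∀ f ∈ J, ∀ t : ℂ, ∀ ht : ‖t‖ < 1, dilateFn d t ht.le f ∈ J

/-- An ideal of polynomials is homogeneous if it contains the homogeneous
components of each of its elements. -/
def IsHomogeneousIdeal {d : ℕ} (I : Ideal (MvPolynomial (Fin d) ℂ)) : Prop :=
  ∀ p ∈ I, ∀ n : ℕ, homogeneousComponent n p ∈ I

namespace MvPolynomial

variable {σ R : Type*} [CommSemiring R]

theorem IsHomogeneous.eval_smul {φ : MvPolynomial σ R} {n : ℕ} (hφ : φ.IsHomogeneous n)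
    (t : R) (x : σ → R) : eval (t • x) φ = t ^ n * eval x φ := by
  rw [eval_eq, eval_eq, Finset.mul_sum]
  refine Finset.sum_congr rfl fun e he => ?_
  have hdeg : ∑ i ∈ e.support, e i = n := by
    rw [← hφ (mem_support_iff.mp he), Finsupp.weight_apply, Finsupp.sum]
    simp
  simp only [Pi.smul_apply, smul_eq_mul, mul_pow, Finset.prod_mul_distrib,
    Finset.prod_pow_eq_pow_sum, hdeg]
  ring

theorem eval_smul_eq_sum_homogeneousComponent {p : MvPolynomial σ R} {N : ℕ}
    (hp : p.totalDegree < N) (t : R) (x : σ → R) :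
    eval (t • x) p = ∑ m ∈ Finset.range N, t ^ m * eval x (homogeneousComponent m p) := by
  have hsum : ∑ m ∈ Finset.range N, homogeneousComponent m p = p := by
    conv_rhs => rw [← sum_homogeneousComponent p]
    refine (Finset.sum_subset (f := fun m => homogeneousComponent m p)
      (Finset.range_subset_range.mpr hp) fun m _ hm => ?_).symm
    exact homogeneousComponent_eq_zero m p (by simpa using hm)
  conv_lhs => rw [← hsum]
  simp only [map_sum, (homogeneousComponent_isHomogeneous _ p).eval_smul]

end MvPolynomial

theorem IsPrimitiveRoot.sum_pow_mul_inv_pow {K : Type*} [Field K] {ζ : K} {k m n : ℕ}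
    (hζ : IsPrimitiveRoot ζ k) (hm : m < k) (hn : n < k) :
    ∑ j ∈ Finset.range k, (ζ ^ m * (ζ ^ n)⁻¹) ^ j = if m = n then (k : K) else 0 := by
  have hζ0 : ζ ≠ 0 := hζ.ne_zero (by omega)
  split_ifs with hmn
  · simp [hmn, mul_inv_cancel₀ (pow_ne_zero n hζ0)]
  · have hne : ζ ^ m * (ζ ^ n)⁻¹ ≠ 1 := fun h =>
      hmn (hζ.pow_inj hm hn (mul_inv_eq_one₀ (pow_ne_zero n hζ0) |>.mp h))
    rw [geom_sum_eq hne, mul_pow, inv_pow, ← pow_mul, ← pow_mul, mul_comm m, mul_comm n,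
      pow_mul, pow_mul, hζ.pow_eq_one, one_pow, one_pow, inv_one, mul_one, sub_self, zero_div]

section BallAlgebra

open Filter Topology

variable {d : ℕ} {J : Set C(CBall d, ℂ)}

theorem polyMap_apply (p : MvPolynomial (Fin d) ℂ) (z : CBall d) :
    polyMap d p z = eval (fun i => (z : Cd d) i) p := by
  change ContinuousMap.evalAlgHom ℂ ℂ z (aeval (coordFn d) p) = _
  rw [← AlgHom.comp_apply, comp_aeval]
  rfl

theorem polyMap_mem_ballAlg (p : MvPolynomial (Fin d) ℂ) : polyMap d p ∈ ballAlg d :=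
  subset_closure ⟨p, rfl⟩

theorem dilateFn_polyMap {p : MvPolynomial (Fin d) ℂ} {N : ℕ} (hp : p.totalDegree < N)
    (t : ℂ) (ht : ‖t‖ ≤ 1) :
    dilateFn d t ht (polyMap d p) =
      ∑ m ∈ Finset.range N, t ^ m • polyMap d (homogeneousComponent m p) := by
  ext z
  simp only [ContinuousMap.coe_sum, Finset.sum_apply, ContinuousMap.smul_apply, smul_eq_mul,
    polyMap_apply, ← eval_smul_eq_sum_homogeneousComponent hp]
  exact polyMap_apply p (dilatePt d t ht z)

theorem norm_dilateFn_le (t : ℂ) (ht : ‖t‖ ≤ 1) (f : C(CBall d, ℂ)) :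
    ‖dilateFn d t ht f‖ ≤ ‖f‖ :=
  (ContinuousMap.norm_le _ (norm_nonneg f)).mpr fun _ => f.norm_coe_le_norm _

theorem dilateFn_sub (t : ℂ) (ht : ‖t‖ ≤ 1) (f g : C(CBall d, ℂ)) :
    dilateFn d t ht (f - g) = dilateFn d t ht f - dilateFn d t ht g :=
  rfl

theorem norm_mul_pow_le_one {ζ t : ℂ} (hζ : ‖ζ‖ = 1) (ht : ‖t‖ ≤ 1) (j : ℕ) :
    ‖t * ζ ^ j‖ ≤ 1 := by
  rwa [norm_mul, norm_pow, hζ, one_pow, mul_one]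

def dilationAverage (n k : ℕ) {ζ t : ℂ} (hζ : ‖ζ‖ = 1) (ht : ‖t‖ ≤ 1) :
    C(CBall d, ℂ) →ₗ[ℂ] C(CBall d, ℂ) :=
  (k : ℂ)⁻¹ • ∑ j ∈ Finset.range k, ((ζ ^ n)⁻¹) ^ j •
    (ContinuousMap.compRightAlgHom ℂ ℂ
      (dilatePt d (t * ζ ^ j) (norm_mul_pow_le_one hζ ht j))).toLinearMap

theorem dilationAverage_apply (n k : ℕ) {ζ t : ℂ} (hζ : ‖ζ‖ = 1) (ht : ‖t‖ ≤ 1)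
    (f : C(CBall d, ℂ)) :
    dilationAverage n k hζ ht f = (k : ℂ)⁻¹ • ∑ j ∈ Finset.range k,
      ((ζ ^ n)⁻¹) ^ j • dilateFn d (t * ζ ^ j) (norm_mul_pow_le_one hζ ht j) f := by
  simp [dilationAverage, dilateFn]

theorem dilationAverage_polyMap {n k : ℕ} {ζ t : ℂ} (hζ : ‖ζ‖ = 1)
    (hprim : IsPrimitiveRoot ζ k) (ht : ‖t‖ ≤ 1) (hn : n < k) {p : MvPolynomial (Fin d) ℂ}
    (hp : p.totalDegree < k) :
    dilationAverage n k hζ ht (polyMap d p) = t ^ n • polyMap d (homogeneousComponent n p) := by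
  have hk : (k : ℂ) ≠ 0 := Nat.cast_ne_zero.mpr (by omega)
  have hcoeff : ∀ m j,
      ((ζ ^ n)⁻¹) ^ j * (t * ζ ^ j) ^ m = t ^ m * (ζ ^ m * (ζ ^ n)⁻¹) ^ j := fun m j => by ring
  rw [dilationAverage_apply]
  simp only [dilateFn_polyMap hp, Finset.smul_sum, smul_smul, hcoeff]
  rw [Finset.sum_comm]
  simp only [← smul_smul, ← Finset.smul_sum, ← Finset.sum_smul]
  rw [Finset.sum_congr rfl fun m hm => by
    rw [hprim.sum_pow_mul_inv_pow (Finset.mem_range.mp hm) hn]]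
  simp only [ite_smul, zero_smul, smul_ite, smul_zero, Finset.sum_ite_eq', Finset.mem_range, hn,
    if_true]
  rw [smul_comm, smul_smul, smul_smul, mul_assoc, inv_mul_cancel₀ hk, mul_one]

theorem exists_dilationAverage_polyMap (n : ℕ) (p : MvPolynomial (Fin d) ℂ) {t : ℂ}
    (ht : ‖t‖ ≤ 1) : ∃ (k : ℕ) (ζ : ℂ) (hζ : ‖ζ‖ = 1),
      dilationAverage n k hζ ht (polyMap d p) = t ^ n • polyMap d (homogeneousComponent n p) := by
  set k := max p.totalDegree n + 1 with hk
  have hk0 : k ≠ 0 := by omega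
  have hprim := Complex.isPrimitiveRoot_exp k hk0
  exact ⟨k, _, hprim.norm'_eq_one hk0,
    dilationAverage_polyMap _ hprim ht (by omega) (by omega)⟩

theorem norm_dilationAverage_le (n k : ℕ) {ζ t : ℂ} (hζ : ‖ζ‖ = 1) (ht : ‖t‖ ≤ 1)
    (f : C(CBall d, ℂ)) : ‖dilationAverage n k hζ ht f‖ ≤ ‖f‖ := by
  rcases Nat.eq_zero_or_pos k with rfl | hk
  · simp [dilationAverage_apply]
  have hterm : ∀ j ∈ Finset.range k,
      ‖((ζ ^ n)⁻¹) ^ j • dilateFn d (t * ζ ^ j) (norm_mul_pow_le_one hζ ht j) f‖ ≤ ‖f‖ := by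
    intro j _
    rw [norm_smul, norm_pow, norm_inv, norm_pow, hζ, one_pow, inv_one, one_pow, one_mul]
    exact norm_dilateFn_le _ _ f
  rw [dilationAverage_apply, norm_smul, norm_inv, Complex.norm_natCast]
  calc (k : ℝ)⁻¹ * ‖∑ j ∈ Finset.range k, _‖ ≤ (k : ℝ)⁻¹ * (k * ‖f‖) := by
        gcongr
        simpa using norm_sum_le_of_le _ hterm
    _ = ‖f‖ := by field_simp

theorem norm_polyMap_homogeneousComponent_le (n : ℕ) (p : MvPolynomial (Fin d) ℂ) :
    ‖polyMap d (homogeneousComponent n p)‖ ≤ ‖polyMap d p‖ := by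
  obtain ⟨k, ζ, hζ, h⟩ := exists_dilationAverage_polyMap n p norm_one.le
  rw [one_pow, one_smul] at h
  exact h ▸ norm_dilationAverage_le _ _ _ _ _

def IsIdealOfBallAlg.toSubmodule (hJ : IsIdealOfBallAlg d J) :
    Submodule ℂ C(CBall d, ℂ) where
  carrier := J
  zero_mem' := hJ.2.1
  add_mem' hf hg := hJ.2.2.1 _ hf _ hg
  smul_mem' c f hf := by
    rw [Algebra.smul_def, ← (polyMap d).commutes c]
    exact hJ.2.2.2 f hf _ (polyMap_mem_ballAlg _)

def IsIdealOfBallAlg.comap (hJ : IsIdealOfBallAlg d J) :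
    Ideal (MvPolynomial (Fin d) ℂ) where
  carrier := {p | polyMap d p ∈ J}
  zero_mem' := by simpa using hJ.2.1
  add_mem' {p q} hp hq := by simpa using hJ.2.2.1 _ hp _ hq
  smul_mem' q p hp := by simpa using hJ.2.2.2 _ hp _ (polyMap_mem_ballAlg q)

theorem dilationAverage_mem (hJ : IsIdealOfBallAlg d J)
    (hJhom : IsHomogBallIdeal d J) (n k : ℕ) {ζ t : ℂ} (hζ : ‖ζ‖ = 1) (ht : ‖t‖ < 1)
    {f : C(CBall d, ℂ)} (hf : f ∈ J) : dilationAverage n k hζ ht.le f ∈ J := by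
  rw [dilationAverage_apply]
  change _ ∈ hJ.toSubmodule
  refine hJ.toSubmodule.smul_mem _
    (Submodule.sum_mem _ fun j _ => hJ.toSubmodule.smul_mem _ ?_)
  exact hJhom f hf _ (by rwa [norm_mul, norm_pow, hζ, one_pow, mul_one])

/-- `F` is the value at `f` of the extension by continuity of `ι p ↦ ι pₙ`, which is
1-Lipschitz on polynomials by `norm_polyMap_homogeneousComponent_le`. -/
def IsHomogeneousPart (n : ℕ) (f F : C(CBall d, ℂ)) : Prop :=
  ∀ q : MvPolynomial (Fin d) ℂ, ‖polyMap d (homogeneousComponent n q) - F‖ ≤ ‖polyMap d q - f‖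

theorem isHomogeneousPart_polyMap (n : ℕ) (p : MvPolynomial (Fin d) ℂ) :
    IsHomogeneousPart n (polyMap d p) (polyMap d (homogeneousComponent n p)) := fun q => by
  simpa only [map_sub] using norm_polyMap_homogeneousComponent_le n (q - p)

theorem exists_isHomogeneousPart {f : C(CBall d, ℂ)} (hf : f ∈ ballAlg d) (n : ℕ) :
    ∃ F, IsHomogeneousPart n f F := by
  obtain ⟨u, hu, hlim⟩ := mem_closure_iff_seq_limit.mp hf
  choose q hq using hu
  have hcauchy : CauchySeq fun k => polyMap d (homogeneousComponent n (q k)) := by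
    refine Metric.cauchySeq_iff.mpr fun ε hε => ?_
    refine (Metric.cauchySeq_iff.mp hlim.cauchySeq ε hε).imp fun N hN k hk l hl => ?_
    refine lt_of_le_of_lt ?_ (hN k hk l hl)
    simpa only [dist_eq_norm, ← hq] using isHomogeneousPart_polyMap n (q l) (q k)
  obtain ⟨F, hF⟩ := cauchySeq_tendsto_of_complete hcauchy
  refine ⟨F, fun p => le_of_tendsto_of_tendsto' (tendsto_const_nhds.sub hF).norm
    (tendsto_const_nhds.sub hlim).norm fun k => ?_⟩
  simpa only [← hq] using isHomogeneousPart_polyMap n (q k) p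

theorem IsHomogeneousPart.mem_closure_image {n : ℕ} {f F : C(CBall d, ℂ)}
    (h : IsHomogeneousPart n f F) {S T : Set (MvPolynomial (Fin d) ℂ)}
    (hST : ∀ p ∈ S, homogeneousComponent n p ∈ T) (hf : f ∈ closure (polyMap d '' S)) :
    F ∈ closure (polyMap d '' T) := by
  refine Metric.mem_closure_iff.mpr fun ε hε => ?_
  obtain ⟨_, ⟨p, hp, rfl⟩, hfp⟩ := Metric.mem_closure_iff.mp hf ε hε
  refine ⟨_, ⟨_, hST p hp, rfl⟩, ?_⟩
  rw [dist_comm, dist_eq_norm] at hfp ⊢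
  exact (h p).trans_lt hfp

theorem finiteDimensional_homogeneousSubmodule (n : ℕ) :
    FiniteDimensional ℂ (homogeneousSubmodule (Fin d) ℂ n) :=
  Submodule.finiteDimensional_of_le fun _ hp =>
    (mem_restrictTotalDegree _ _ _).mpr ((mem_homogeneousSubmodule _ _).mp hp).totalDegree_le

theorem isClosed_image_polyMap (S : Submodule ℂ (MvPolynomial (Fin d) ℂ))
    [FiniteDimensional ℂ S] : IsClosed (polyMap d '' S) :=
  Submodule.closed_of_finiteDimensional (S.map (polyMap d).toLinearMap)

theorem IsHomogeneousPart.mem_range {n : ℕ} {f F : C(CBall d, ℂ)}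
    (h : IsHomogeneousPart n f F) (hf : f ∈ ballAlg d) : F ∈ Set.range (polyMap d) := by
  have := finiteDimensional_homogeneousSubmodule (d := d) n
  have hF := h.mem_closure_image (S := Set.univ) (T := homogeneousSubmodule (Fin d) ℂ n)
    (fun p _ => homogeneousComponent_isHomogeneous n p) (by rwa [Set.image_univ])
  rw [(isClosed_image_polyMap _).closure_eq] at hF
  obtain ⟨p, -, hp⟩ := hF
  exact ⟨p, hp⟩

theorem IsHomogeneousPart.mem (hJ : IsIdealOfBallAlg d J)
    (hJcl : IsClosed J) (hJhom : IsHomogBallIdeal d J) {n : ℕ} {f F : C(CBall d, ℂ)}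
    (h : IsHomogeneousPart n f F) (hf : f ∈ J) : F ∈ J := by
  set t : ℂ := 2⁻¹
  have ht : ‖t‖ < 1 := by norm_num [t]
  suffices t ^ n • F ∈ J by
    have h2 : (2 : ℂ) ^ n • t ^ n • F ∈ J := hJ.toSubmodule.smul_mem _ this
    simpa [smul_smul, t, ← mul_pow] using h2
  rw [← hJcl.closure_eq, Metric.mem_closure_iff]
  intro ε hε
  obtain ⟨_, ⟨q, rfl⟩, hq⟩ := Metric.mem_closure_iff.mp (hJ.1 hf) (ε / 2) (by positivity)
  rw [dist_eq_norm, norm_sub_rev] at hq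
  obtain ⟨k, ζ, hζ, hkq⟩ := exists_dilationAverage_polyMap n q ht.le
  refine ⟨_, dilationAverage_mem hJ hJhom n k hζ ht hf, ?_⟩
  calc dist (t ^ n • F) (dilationAverage n k hζ ht.le f)
      ≤ dist (t ^ n • F) (t ^ n • polyMap d (homogeneousComponent n q)) +
          dist (dilationAverage n k hζ ht.le (polyMap d q))
            (dilationAverage n k hζ ht.le f) := by
        rw [← hkq]; exact dist_triangle _ _ _
    _ ≤ ‖polyMap d q - f‖ + ‖polyMap d q - f‖ := by
        rw [dist_eq_norm, dist_eq_norm, ← smul_sub, ← map_sub, norm_smul, norm_sub_rev]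
        gcongr
        · rw [norm_pow]
          exact (mul_le_of_le_one_left (norm_nonneg _)
            (pow_le_one₀ (norm_nonneg t) ht.le)).trans (h q)
        · exact norm_dilationAverage_le _ _ _ _ _
    _ < ε := by linarith

theorem polyMap_injective : Function.Injective (polyMap d) := by
  refine (injective_iff_map_eq_zero _).mpr fun p hp => ?_
  rw [← sum_homogeneousComponent p]
  refine Finset.sum_eq_zero fun n _ => MvPolynomial.funext fun x => ?_
  have hpn : polyMap d (homogeneousComponent n p) = 0 := by
    simpa [hp] using norm_polyMap_homogeneousComponent_le n p
  set r : ℝ := ‖WithLp.toLp 2 x‖ + 1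
  have hr : 0 < r := by positivity
  have hz : WithLp.toLp 2 ((r : ℂ)⁻¹ • x) ∈ CBall d := by
    rw [mem_closedBall_zero_iff, WithLp.toLp_smul, norm_smul, norm_inv, Complex.norm_real,
      Real.norm_of_nonneg hr.le, inv_mul_le_one₀ hr]
    linarith
  have hzero := congr($hpn ⟨_, hz⟩)
  rw [polyMap_apply, ContinuousMap.zero_apply] at hzero
  calc eval x (homogeneousComponent n p)
      = eval ((r : ℂ) • (r : ℂ)⁻¹ • x) (homogeneousComponent n p) := by
        rw [smul_inv_smul₀ (by exact_mod_cast hr.ne')]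
    _ = 0 := by
        rw [(homogeneousComponent_isHomogeneous n p).eval_smul]
        exact mul_eq_zero_of_right _ hzero

theorem IsHomogeneousIdeal.mem_of_polyMap_mem_closure {K : Ideal (MvPolynomial (Fin d) ℂ)}
    (hK : IsHomogeneousIdeal K) {p : MvPolynomial (Fin d) ℂ}
    (hp : polyMap d p ∈ closure (polyMap d '' K)) : p ∈ K := by
  rw [← sum_homogeneousComponent p]
  refine K.sum_mem fun n _ => ?_
  let S := K.restrictScalars ℂ ⊓ homogeneousSubmodule (Fin d) ℂ n
  have := finiteDimensional_homogeneousSubmodule (d := d) n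
  have : FiniteDimensional ℂ S := Submodule.finiteDimensional_of_le inf_le_right
  have h := (isHomogeneousPart_polyMap n p).mem_closure_image (T := S)
    (fun q hq => ⟨hK q hq n, homogeneousComponent_isHomogeneous n q⟩) hp
  rw [(isClosed_image_polyMap S).closure_eq] at h
  obtain ⟨q, hq, hqp⟩ := h
  exact polyMap_injective hqp ▸ hq.1

theorem tendsto_dilateFn_one (f : C(CBall d, ℂ)) {α : Type*} {l : Filter α} {t : α → ℂ}
    (ht : ∀ a, ‖t a‖ ≤ 1) (hlim : Tendsto t l (𝓝 1)) :
    Tendsto (fun a => dilateFn d (t a) (ht a) f) l (𝓝 f) := by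
  let G : C(closedBall (0 : ℂ) 1 × CBall d, ℂ) :=
    f.comp ⟨fun p => ⟨(p.1 : ℂ) • (p.2 : Cd d), by
      rw [mem_closedBall_zero_iff, norm_smul]
      exact mul_le_one₀ (mem_closedBall_zero_iff.mp p.1.2) (norm_nonneg _)
        (mem_closedBall_zero_iff.mp p.2.2)⟩, by fun_prop⟩
  have hG : G.curry ⟨1, by simp⟩ = f := by ext z; simp [G]
  have h := (G.curry.continuous.tendsto _).comp
    (tendsto_subtype_rng.mpr hlim : Tendsto (fun a => (⟨t a, by simpa using ht a⟩ :
      closedBall (0 : ℂ) 1)) l (𝓝 ⟨1, by simp⟩))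
  rw [hG] at h
  exact h

theorem norm_dilateFn_sub_sum_le {f : C(CBall d, ℂ)} {F : ℕ → C(CBall d, ℂ)}
    (hF : ∀ m, IsHomogeneousPart m f (F m)) {t : ℂ} (ht : ‖t‖ < 1)
    (q : MvPolynomial (Fin d) ℂ) :
    ‖dilateFn d t ht.le f - ∑ m ∈ Finset.range (q.totalDegree + 1), t ^ m • F m‖ ≤
      (1 + (1 - ‖t‖)⁻¹) * ‖polyMap d q - f‖ := by
  set N := q.totalDegree + 1
  have hsplit : dilateFn d t ht.le f - ∑ m ∈ Finset.range N, t ^ m • F m =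
      dilateFn d t ht.le (f - polyMap d q) +
        ∑ m ∈ Finset.range N, t ^ m • (polyMap d (homogeneousComponent m q) - F m) := by
    rw [dilateFn_sub, dilateFn_polyMap (Nat.lt_succ_self _)]
    simp only [smul_sub, Finset.sum_sub_distrib]
    abel
  have hgeom : ∑ m ∈ Finset.range N, ‖t‖ ^ m ≤ (1 - ‖t‖)⁻¹ := by
    have := geom_sum_Ico_le_of_lt_one (m := 0) (n := N) (norm_nonneg t) ht
    rwa [← Finset.range_eq_Ico, pow_zero, one_div] at this
  rw [hsplit]
  calc _ ≤ ‖dilateFn d t ht.le (f - polyMap d q)‖ +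
        ∑ m ∈ Finset.range N, ‖t ^ m • (polyMap d (homogeneousComponent m q) - F m)‖ :=
        norm_add_le_of_le le_rfl (norm_sum_le _ _)
    _ ≤ ‖polyMap d q - f‖ + ∑ m ∈ Finset.range N, ‖t‖ ^ m * ‖polyMap d q - f‖ := by
        gcongr with m
        · exact (norm_dilateFn_le _ _ _).trans (norm_sub_rev _ _).le
        · rw [norm_smul, norm_pow]
          exact mul_le_mul_of_nonneg_left (hF m q) (by positivity)
    _ = (1 + ∑ m ∈ Finset.range N, ‖t‖ ^ m) * ‖polyMap d q - f‖ := by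
        rw [← Finset.sum_mul]; ring
    _ ≤ _ := by gcongr

theorem dilateFn_mem_closure_image_comap (hJ : IsIdealOfBallAlg d J) (hJcl : IsClosed J)
    (hJhom : IsHomogBallIdeal d J) {f : C(CBall d, ℂ)} (hf : f ∈ J) {t : ℂ} (ht : ‖t‖ < 1) :
    dilateFn d t ht.le f ∈ closure (polyMap d '' hJ.comap) := by
  have hfB := hJ.1 hf
  choose F hF using exists_isHomogeneousPart hfB
  have hFK : ∀ m, ∃ h ∈ hJ.comap, polyMap d h = F m := fun m => by
    obtain ⟨h, hh⟩ := (hF m).mem_range hfB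
    exact ⟨h, show polyMap d h ∈ J from hh ▸ (hF m).mem hJ hJcl hJhom hf, hh⟩
  choose h hhK hhF using hFK
  refine Metric.mem_closure_iff.mpr fun ε hε => ?_
  set c := 1 + (1 - ‖t‖)⁻¹
  have hc : 0 < c := by have := sub_pos.2 ht; positivity
  obtain ⟨_, ⟨q, rfl⟩, hq⟩ := Metric.mem_closure_iff.mp hfB (ε / c) (by positivity)
  rw [dist_eq_norm, norm_sub_rev] at hq
  refine ⟨_, ⟨∑ m ∈ Finset.range (q.totalDegree + 1), C (t ^ m) * h m,
    hJ.comap.sum_mem fun m _ => hJ.comap.mul_mem_left _ (hhK m), rfl⟩, ?_⟩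
  have hP : polyMap d (∑ m ∈ Finset.range (q.totalDegree + 1), C (t ^ m) * h m) =
      ∑ m ∈ Finset.range (q.totalDegree + 1), t ^ m • F m := by
    simp [hhF, Algebra.smul_def]
  rw [hP, dist_eq_norm]
  calc _ ≤ c * ‖polyMap d q - f‖ := norm_dilateFn_sub_sum_le hF ht q
    _ < c * (ε / c) := by gcongr
    _ = ε := mul_div_cancel₀ _ hc.ne'

theorem subset_closure_image_comap (hJ : IsIdealOfBallAlg d J) (hJcl : IsClosed J)
    (hJhom : IsHomogBallIdeal d J) : J ⊆ closure (polyMap d '' hJ.comap) := fun f hf => by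
  have hs : ∀ k : ℕ, ‖(k : ℂ) / (k + 1)‖ < 1 := fun k => by
    rw [norm_div, ← Nat.cast_succ, Complex.norm_natCast, Complex.norm_natCast,
      div_lt_one (by positivity)]
    simp
  refine isClosed_closure.mem_of_tendsto
    (tendsto_dilateFn_one f (fun k => (hs k).le) (tendsto_natCast_div_add_atTop 1))
    (Eventually.of_forall fun k => dilateFn_mem_closure_image_comap hJ hJcl hJhom hf (hs k))

theorem isHomogeneousIdeal_comap (hJ : IsIdealOfBallAlg d J) (hJcl : IsClosed J)
    (hJhom : IsHomogBallIdeal d J) : IsHomogeneousIdeal hJ.comap := fun p hp n =>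
  (isHomogeneousPart_polyMap n p).mem hJ hJcl hJhom hp

end BallAlgebra

/-- Let `J` be a closed homogeneous ideal of the ball algebra.
Then `K = {p : ι(p) ∈ J}` is a homogeneous polynomial ideal with
`ι(K) ⊆ J ⊆ closure(ι(K))` (hence `J = closure(ι(K))`), and `K` is the unique
homogeneous polynomial ideal with this property. -/
theorem stmt15 (d : ℕ) (J : Set C(CBall d, ℂ))
    (hJ : IsIdealOfBallAlg d J) (hJcl : IsClosed J) (hJhom : IsHomogBallIdeal d J) :
    ∃ K : Ideal (MvPolynomial (Fin d) ℂ),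
      (K : Set (MvPolynomial (Fin d) ℂ)) = {p | polyMap d p ∈ J} ∧
      IsHomogeneousIdeal K ∧
      polyMap d '' (K : Set (MvPolynomial (Fin d) ℂ)) ⊆ J ∧
      J = closure (polyMap d '' (K : Set (MvPolynomial (Fin d) ℂ))) ∧
      ∀ K' : Ideal (MvPolynomial (Fin d) ℂ), IsHomogeneousIdeal K' →
        polyMap d '' (K' : Set (MvPolynomial (Fin d) ℂ)) ⊆ J →
        J ⊆ closure (polyMap d '' (K' : Set (MvPolynomial (Fin d) ℂ))) → K' = K := by
  have himage : polyMap d '' (hJ.comap : Set (MvPolynomial (Fin d) ℂ)) ⊆ J := by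
    rintro _ ⟨p, hp, rfl⟩
    exact hp
  refine ⟨hJ.comap, rfl, isHomogeneousIdeal_comap hJ hJcl hJhom, himage,
    (subset_closure_image_comap hJ hJcl hJhom).antisymm (closure_minimal himage hJcl), ?_⟩
  intro K' hK' hK'J hJK'
  exact le_antisymm (fun p hp => hK'J ⟨p, hp, rfl⟩)
    fun p hp => hK'.mem_of_polyMap_mem_closure (hJK' hp)
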